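/- Discrete Gaussian tails are bounded by shifted continuous Gaussian tails: For every integer m ≥ 1 and every real σ > 0, if X is distributed according to the discrete Gaussian N_ℤ(σ²) and Z is distributed according to the centered real Gaussian measure N(0, σ²), then Pr[X ≥ m] ≤ Pr[Z ≥ m − 1]. -/

import Mathlib

/-!
Write both laws through the Gaussian density `φ` of `N(0, σ²)`: `Pr[X = x] = (√(2πσ²) / S) φ(x)`
with `S = ∑_{y ∈ ℤ} exp(-y²/(2σ²))`. Poisson summation gives `S ≥ √(2πσ²)`, so
`Pr[X ≥ m] ≤ ∑_{x ≥ m} φ(x)`, and since `φ` decreases on `[m - 1, ∞)` each `φ(x)` is at most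
`∫_{x-1}^{x} φ`, whence the sum is at most `∫_{m-1}^∞ φ = Pr[Z ≥ m - 1]`.
-/

open ProbabilityTheory
open MeasureTheory Real Set

/-- The discrete Gaussian mass function `N_ℤ(v)` (real-valued) with variance
parameter `v = σ²`: `Pr[X = x] = exp(-x²/(2v)) / ∑_{y ∈ ℤ} exp(-y²/(2v))`. -/
noncomputable def discreteGaussianPMF (v : ℝ) (x : ℤ) : ℝ :=
  Real.exp (-(x : ℝ) ^ 2 / (2 * v)) / ∑' y : ℤ, Real.exp (-(y : ℝ) ^ 2 / (2 * v))

theorem AntitoneOn.tsum_add_nat_succ_le_integral_Ioi {f : ℝ → ℝ} {x₀ : ℝ}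
    (anti : AntitoneOn f (Ici x₀)) (integrable : IntegrableOn f (Ioi x₀))
    (nonneg : ∀ t ∈ Ioi x₀, 0 ≤ f t) :
    ∑' n : ℕ, f (x₀ + (n + 1 : ℕ)) ≤ ∫ t in Ioi x₀, f t := by
  refine tsum_le_of_sum_le' (setIntegral_nonneg measurableSet_Ioi nonneg) fun s ↦ ?_
  obtain ⟨N, hN⟩ := s.exists_nat_subset_range
  calc ∑ n ∈ s, f (x₀ + (n + 1 : ℕ))
      ≤ ∑ n ∈ Finset.range N, f (x₀ + (n + 1 : ℕ)) :=
        Finset.sum_le_sum_of_subset_of_nonneg hN fun n _ _ ↦ nonneg _ (by simp; positivity)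
    _ ≤ ∫ t in x₀..x₀ + N, f t := (anti.mono Icc_subset_Ici_self).sum_le_integral
    _ = ∫ t in Ioc x₀ (x₀ + N), f t := intervalIntegral.integral_of_le (by simp)
    _ ≤ ∫ t in Ioi x₀, f t :=
        setIntegral_mono_set integrable (ae_restrict_of_forall_mem measurableSet_Ioi nonneg)
          Ioc_subset_Ioi_self.eventuallyLE

theorem Int.tsum_ite_le_eq_tsum_nat {M : Type*} [AddCommMonoid M] [TopologicalSpace M]
    (f : ℤ → M) (m : ℤ) :
    ∑' x : ℤ, (if m ≤ x then f x else 0) = ∑' n : ℕ, f (m + n) := by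
  have support_sub : Function.support (fun x ↦ if m ≤ x then f x else 0) ⊆
      Set.range fun n : ℕ ↦ m + n := by
    intro x hx
    have hmx : m ≤ x := by by_contra h; simp [h] at hx
    exact ⟨(x - m).toNat, show m + ((x - m).toNat : ℤ) = x by omega⟩
  rw [← (add_right_injective m |>.comp Nat.cast_injective).tsum_eq support_sub]
  simp

theorem AntitoneOn.tsum_int_ite_le_le_integral_Ioi {f : ℝ → ℝ} {m : ℤ}
    (anti : AntitoneOn f (Ici ((m : ℝ) - 1))) (integrable : IntegrableOn f (Ioi ((m : ℝ) - 1)))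
    (nonneg : ∀ t ∈ Ioi ((m : ℝ) - 1), 0 ≤ f t) :
    ∑' x : ℤ, (if m ≤ x then f x else 0) ≤ ∫ t in Ioi ((m : ℝ) - 1), f t := by
  rw [Int.tsum_ite_le_eq_tsum_nat (fun x : ℤ ↦ f x)]
  convert anti.tsum_add_nat_succ_le_integral_Ioi integrable nonneg using 3
  push_cast
  congr 1
  ring

theorem summable_exp_neg_mul_int_sq {c : ℝ} (hc : 0 < c) :
    Summable fun n : ℤ ↦ exp (-c * (n : ℝ) ^ 2) := by
  have summable_nat : Summable fun n : ℕ ↦ exp (-c * (n : ℝ) ^ 2) := by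
    refine .of_nonneg_of_le (fun n ↦ (exp_pos _).le) (fun n ↦ exp_le_exp.2 ?_)
      (summable_exp_nat_mul_iff.mpr (neg_neg_of_pos hc))
    have : (n : ℝ) ≤ (n : ℝ) ^ 2 := by exact_mod_cast Nat.le_self_pow two_ne_zero n
    nlinarith
  exact .of_nat_of_neg (by simpa using summable_nat) (by simpa using summable_nat)

theorem sqrt_two_pi_mul_le_tsum_exp_neg_int_sq {v : ℝ} (hv : 0 < v) :
    √(2 * π * v) ≤ ∑' n : ℤ, exp (-(n : ℝ) ^ 2 / (2 * v)) := by
  set a := (2 * π * v)⁻¹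
  have ha : 0 < a := by positivity
  -- Poisson summation: `∑ exp(-π a n²) = a^(-1/2) ∑ exp(-π n²/a)`, and the last sum is `≥ 1`.
  have poisson := tsum_exp_neg_mul_int_sq ha
  have one_le : 1 ≤ ∑' n : ℤ, exp (-π / a * (n : ℝ) ^ 2) := by
    have summable := summable_exp_neg_mul_int_sq (c := π / a) (by positivity)
    simpa [neg_div] using summable.le_tsum 0 fun n _ ↦ (exp_pos _).le
  have sqrt_eq : √(2 * π * v) = 1 / a ^ (1 / 2 : ℝ) := by
    rw [one_div, ← inv_rpow ha.le, inv_inv, sqrt_eq_rpow]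
  have exponent_eq (n : ℤ) : -(n : ℝ) ^ 2 / (2 * v) = -π * a * (n : ℝ) ^ 2 := by
    simp only [a]
    field_simp
  calc √(2 * π * v) ≤ 1 / a ^ (1 / 2 : ℝ) * ∑' n : ℤ, exp (-π / a * (n : ℝ) ^ 2) := by
        rw [sqrt_eq]; exact le_mul_of_one_le_right (by positivity) one_le
    _ = ∑' n : ℤ, exp (-(n : ℝ) ^ 2 / (2 * v)) := by simp_rw [exponent_eq, poisson]

theorem antitoneOn_gaussianPDFReal_zero (v : NNReal) :
    AntitoneOn (gaussianPDFReal 0 v) (Ici 0) := by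
  intro s hs t _ hst
  unfold gaussianPDFReal
  gcongr
  simp only [sub_zero]
  exact hs

theorem discreteGaussianPMF_eq_mul_gaussianPDFReal {v : ℝ} (hv : 0 < v) (x : ℤ) :
    discreteGaussianPMF v x = √(2 * π * v) / (∑' y : ℤ, exp (-(y : ℝ) ^ 2 / (2 * v))) *
      gaussianPDFReal 0 v.toNNReal x := by
  have : √(2 * π * v) ≠ 0 := by positivity
  rw [discreteGaussianPMF, gaussianPDFReal, Real.coe_toNNReal _ hv.le, sub_zero]
  field_simp

/-- Discrete Gaussian tails are bounded by shifted continuous Gaussian tails: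
for integer `m ≥ 1`, `Pr[X ≥ m] ≤ Pr[Z ≥ m - 1]` where `X ∼ N_ℤ(σ²)` and
`Z ∼ N(0, σ²)`. -/
theorem discreteGaussian_tail_le_gaussian_tail (m : ℤ) (hm : 1 ≤ m) (σ : ℝ) (hσ : 0 < σ) :
    ENNReal.ofReal (∑' x : ℤ, if m ≤ x then discreteGaussianPMF (σ ^ 2) x else 0)
      ≤ gaussianReal 0 ((σ ^ 2).toNNReal) {z : ℝ | (m : ℝ) - 1 ≤ z} := by
  have hv : 0 < σ ^ 2 := by positivity
  set f := gaussianPDFReal 0 (σ ^ 2).toNNReal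
  have ratio_le_one : √(2 * π * σ ^ 2) / ∑' y : ℤ, exp (-(y : ℝ) ^ 2 / (2 * σ ^ 2)) ≤ 1 :=
    div_le_one_of_le₀ (sqrt_two_pi_mul_le_tsum_exp_neg_int_sq hv) (by positivity)
  have tail_le : ∑' x : ℤ, (if m ≤ x then f x else 0) ≤ ∫ t in Ioi ((m : ℝ) - 1), f t :=
    ((antitoneOn_gaussianPDFReal_zero _).mono (Ici_subset_Ici.2 (sub_nonneg.2 (mod_cast hm))))
      |>.tsum_int_ite_le_le_integral_Ioi (integrable_gaussianPDFReal _ _).integrableOn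
        fun t _ ↦ gaussianPDFReal_nonneg _ _ _
  rw [gaussianReal_apply_eq_integral 0 (by simpa using hv.ne'), Ici_def,
    integral_Ici_eq_integral_Ioi]
  refine ENNReal.ofReal_le_ofReal ?_
  simp_rw [discreteGaussianPMF_eq_mul_gaussianPDFReal hv, ← mul_ite_zero, tsum_mul_left]
  have tail_nonneg : 0 ≤ ∑' x : ℤ, (if m ≤ x then f x else 0) :=
    tsum_nonneg fun x ↦ ite_nonneg (gaussianPDFReal_nonneg _ _ _) le_rfl
  exact (mul_le_of_le_one_left tail_nonneg ratio_le_one).trans tail_le
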